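/- Fix q with 1 < q < 2, a relaxation interval ε = [ε₋, ε₊] with 0 < ε₋ ≤ ε₊ < ∞, and let Ω ⊂ ℝ^d be a measurable set of finite Lebesgue measure. Let σ_ε, τ_n, τ_{n+1} ∈ L²(Ω; ℝ^d) and set w_n = clamp_ε(|τ_n|)^{q-2}. Assume: (i) ∫_Ω A*_ε(σ_ε)·(τ_n - σ_ε) dx = 0 (Euler–Lagrange equation for the minimizer σ_ε of J*_ε over the divergence-constrained set), and (ii) ∫_Ω w_n τ_{n+1}·(τ_n - τ_{n+1}) dx = 0 and ∫_Ω w_n τ_{n+1}·(τ_n - σ_ε) dx = 0 (the equations characterizing the Kačanov iterate τ_{n+1}, tested with divergence-free directions). Then there exists a constant C_q < ∞ depending solely on q such that, with δ = C_q^{-1}(ε₋/ε₊)^{2-q}, one has δ (J*_ε(τ_n) - J*_ε(σ_ε)) ≤ J*_ε(τ_n) - J*_ε(τ_{n+1}). -/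

import Mathlib

open Real MeasureTheory
open scoped RealInnerProductSpace

/-- The relaxed integrand `κ*_ε`. -/
noncomputable def kappaStar (q em ep t : ℝ) : ℝ :=
  if t ≤ em then (1/2) * em ^ (q-2) * t^2 + (1/q - 1/2) * em ^ q
  else if t ≤ ep then (1/q) * t ^ q
  else (1/2) * ep ^ (q-2) * t^2 + (1/q - 1/2) * ep ^ q

/-- The relaxed dual energy `J*_ε(τ) = ∫_Ω κ*_ε(|τ|) dx`. -/
noncomputable def Jeps (q em ep : ℝ) {d : ℕ} (Ω : Set (EuclideanSpace ℝ (Fin d)))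
    (τ : EuclideanSpace ℝ (Fin d) → EuclideanSpace ℝ (Fin d)) : ℝ :=
  ∫ x in Ω, kappaStar q em ep ‖τ x‖

/-- `A*_ε(P) = clamp_ε(|P|)^(q-2) P`. -/
noncomputable def Astar (q em ep : ℝ) {d : ℕ} (P : EuclideanSpace ℝ (Fin d)) :
    EuclideanSpace ℝ (Fin d) :=
  (max em (min ‖P‖ ep)) ^ (q-2) • P

/-!
The Kačanov step minimizes the quadric frozen at the weight `w = clamp_ε(|τₙ|)^(q-2)`, which
majorizes `κ*_ε` and touches it at `τₙ`. By the first relation (ii) the energy drop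
`J*_ε(τₙ) - J*_ε(τₙ₊₁)` is therefore at least `½ ‖τₙ - τₙ₊₁‖²_w`, and Young's inequality bounds
this below by `θ ⟨τₙ - τₙ₊₁, τₙ - σ⟩_w - θ²/2 ‖τₙ - σ‖²_w`; the second relation (ii) removes
`τₙ₊₁` from the first term. Since the derivative `clamp_ε(t)^(q-2) t` of `κ*_ε` is strongly
monotone with modulus `(q-1) ε₊^(q-2)`, strong convexity turns `θ ⟨τₙ, τₙ - σ⟩_w` into
`θ (J*_ε(τₙ) - J*_ε(σ))` plus a quadratic term absorbing the Young defect as soon as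
`θ w ≤ (q-1) ε₊^(q-2)`, e.g. for `θ = (q-1) (ε₋/ε₊)^(2-q)`. All of this holds pointwise, before
integration.
-/

lemma add_deriv_mul_sub_add_sq_le {f f' : ℝ → ℝ} {m : ℝ} (hf : ∀ x, HasDerivAt f (f' x) x)
    (hf' : Monotone fun x => f' x - m * x) (t s : ℝ) :
    f t + f' t * (s - t) + m / 2 * (s - t) ^ 2 ≤ f s := by
  set φ : ℝ → ℝ := fun r => f r - f' t * r - m / 2 * (r - t) ^ 2 with hφ
  have hφ' : ∀ r, HasDerivAt φ ((f' r - m * r) - (f' t - m * t)) r := by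
    intro r
    have := (((hf r).sub ((hasDerivAt_id r).const_mul (f' t))).sub
      ((((hasDerivAt_id r).sub_const t).pow 2).const_mul (m / 2)))
    exact this.congr_deriv (by simp only [id, mul_one]; push_cast; ring)
  have hcont : Continuous φ := continuous_iff_continuousAt.2 fun r => (hφ' r).continuousAt
  suffices φ t ≤ φ s by simp only [hφ] at this; linarith
  rcases le_total t s with hts | hst
  · refine monotoneOn_of_hasDerivWithinAt_nonneg (convex_Ici t) hcont.continuousOn
      (fun r _ => (hφ' r).hasDerivWithinAt) (fun r hr => ?_) Set.self_mem_Ici hts hts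
    rw [interior_Ici] at hr
    exact sub_nonneg.2 (hf' (le_of_lt hr))
  · refine antitoneOn_of_hasDerivWithinAt_nonpos (convex_Iic t) hcont.continuousOn
      (fun r _ => (hφ' r).hasDerivWithinAt) (fun r hr => ?_) hst Set.self_mem_Iic hst
    rw [interior_Iic] at hr
    exact sub_nonpos.2 (hf' (le_of_lt hr))

def clamp (em ep t : ℝ) : ℝ := max em (min t ep)

section Clamp

variable {em ep t : ℝ}

lemma le_clamp : em ≤ clamp em ep t := le_max_left _ _

lemma clamp_le (hme : em ≤ ep) : clamp em ep t ≤ ep := max_le hme (min_le_right _ _)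

lemma clamp_of_le (hme : em ≤ ep) (ht : t ≤ em) : clamp em ep t = em := by
  rw [clamp, min_eq_left (ht.trans hme), max_eq_left ht]

lemma clamp_of_mem (h1 : em ≤ t) (h2 : t ≤ ep) : clamp em ep t = t := by
  rw [clamp, min_eq_left h2, max_eq_right h1]

lemma clamp_of_ge (hme : em ≤ ep) (ht : ep ≤ t) : clamp em ep t = ep := by
  rw [clamp, min_eq_right ht, max_eq_right hme]

end Clamp

/-- The quadratic majorant of `t ↦ t ^ q / q` that touches it at `t = c`. -/
noncomputable def quadMajorant (q c t : ℝ) : ℝ := (1/2) * c ^ (q-2) * t^2 + (1/q - 1/2) * c ^ q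

section Scalar

variable {q em ep c t : ℝ}

lemma rpow_sub_two_mul_sq (hc : 0 < c) : c ^ (q-2) * c^2 = c ^ q := by
  rw [← Real.rpow_natCast c 2, ← Real.rpow_add hc]
  norm_num

lemma quadMajorant_self (hc : 0 < c) : quadMajorant q c c = c ^ q / q := by
  rw [quadMajorant, mul_assoc, rpow_sub_two_mul_sq hc]
  ring

/-- Young's inequality for the exponents `2/q` and `2/(2-q)`. -/
lemma rpow_div_le_quadMajorant (hq1 : 1 < q) (hq2 : q < 2) (hc : 0 < c) (ht : 0 ≤ t) :
    t ^ q / q ≤ quadMajorant q c t := by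
  have hq : 0 < q := by linarith
  have young := Real.geom_mean_le_arith_mean2_weighted (w₁ := q/2) (w₂ := 1 - q/2)
    (p₁ := c ^ (q-2) * t^2) (p₂ := c ^ q) (by linarith) (by linarith) (by positivity)
    (by positivity) (by ring)
  have key : (c ^ (q-2) * t^2) ^ (q/2) * (c ^ q) ^ (1 - q/2) = t ^ q := by
    rw [Real.mul_rpow (by positivity) (by positivity), ← Real.rpow_natCast t 2,
      ← Real.rpow_mul ht, ← Real.rpow_mul hc.le, ← Real.rpow_mul hc.le, mul_right_comm,
      ← Real.rpow_add hc]
    norm_num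
    ring_nf
    simp
  rw [key] at young
  calc t ^ q / q ≤ (q/2 * (c ^ (q-2) * t^2) + (1 - q/2) * c ^ q) / q := by gcongr
    _ = quadMajorant q c t := by rw [quadMajorant]; field_simp

lemma quadMajorant_le_quadMajorant (hq1 : 1 < q) (hq2 : q < 2) {a : ℝ} (ha : 0 < a)
    (hc : 0 < c) (h : 0 ≤ (c ^ (q-2) - a ^ (q-2)) * (t^2 - a^2)) :
    quadMajorant q a t ≤ quadMajorant q c t := by
  have touch : quadMajorant q a a ≤ quadMajorant q c a := by
    rw [quadMajorant_self ha]; exact rpow_div_le_quadMajorant hq1 hq2 hc ha.le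
  have split : quadMajorant q c t - quadMajorant q a t
      = (quadMajorant q c a - quadMajorant q a a)
        + (1/2) * ((c ^ (q-2) - a ^ (q-2)) * (t^2 - a^2)) := by
    simp only [quadMajorant]; ring
  linarith

lemma kappaStar_eq_quadMajorant (hem : 0 < em) (hme : em ≤ ep) (t : ℝ) :
    kappaStar q em ep t = quadMajorant q (clamp em ep t) t := by
  unfold kappaStar
  rcases le_or_gt t em with h | h
  · rw [if_pos h, clamp_of_le hme h, quadMajorant]
  rw [if_neg h.not_ge]
  rcases le_or_gt t ep with h' | h'
  · rw [if_pos h', clamp_of_mem h.le h', quadMajorant_self (hem.trans h)]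
    ring
  · rw [if_neg h'.not_ge, clamp_of_ge hme h'.le, quadMajorant]

lemma kappaStar_le_quadMajorant (hq1 : 1 < q) (hq2 : q < 2) (hem : 0 < em) (hme : em ≤ ep)
    (ht : 0 ≤ t) (hc1 : em ≤ c) (hc2 : c ≤ ep) :
    kappaStar q em ep t ≤ quadMajorant q c t := by
  have hc : 0 < c := hem.trans_le hc1
  rw [kappaStar_eq_quadMajorant hem hme]
  refine quadMajorant_le_quadMajorant hq1 hq2 (hem.trans_le le_clamp) hc ?_
  rcases le_total t em with h | h
  · rw [clamp_of_le hme h]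
    exact mul_nonneg_of_nonpos_of_nonpos
      (sub_nonpos.2 (Real.rpow_le_rpow_of_nonpos hem hc1 (by linarith)))
      (sub_nonpos.2 (pow_le_pow_left₀ ht h 2))
  rcases le_total t ep with h' | h'
  · simp [clamp_of_mem h h']
  · rw [clamp_of_ge hme h']
    exact mul_nonneg (sub_nonneg.2 (Real.rpow_le_rpow_of_nonpos hc hc2 (by linarith)))
      (sub_nonneg.2 (pow_le_pow_left₀ (hem.trans_le hme).le h' 2))

lemma hasDerivAt_quadMajorant (c t : ℝ) :
    HasDerivAt (quadMajorant q c) (c ^ (q-2) * t) t := by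
  have := ((hasDerivAt_pow 2 t).const_mul ((1/2) * c ^ (q-2))).add_const ((1/q - 1/2) * c ^ q)
  exact this.congr_deriv (by push_cast; ring)

lemma hasDerivAt_kappaStar (hq : q ≠ 0) (hem : 0 < em) (hme : em ≤ ep) (t : ℝ) :
    HasDerivAt (kappaStar q em ep) (clamp em ep t ^ (q-2) * t) t := by
  have on_low : ∀ y ∈ Set.Iic em, kappaStar q em ep y = quadMajorant q em y := fun y hy => by
    rw [kappaStar_eq_quadMajorant hem hme, clamp_of_le hme hy]
  have on_mid : ∀ y ∈ Set.Icc em ep, kappaStar q em ep y = y ^ q / q := fun y hy => by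
    rw [kappaStar_eq_quadMajorant hem hme, clamp_of_mem hy.1 hy.2,
      quadMajorant_self (hem.trans_le hy.1)]
  have on_high : ∀ y ∈ Set.Ici ep, kappaStar q em ep y = quadMajorant q ep y := fun y hy => by
    rw [kappaStar_eq_quadMajorant hem hme, clamp_of_ge hme hy]
  have low : HasDerivWithinAt (kappaStar q em ep) (clamp em ep t ^ (q-2) * t)
      (Set.Iic em) t := by
    by_cases ht : t ∈ Set.Iic em
    · rw [clamp_of_le hme ht]
      exact (hasDerivAt_quadMajorant em t).hasDerivWithinAt.congr on_low (on_low t ht)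
    · exact HasFDerivWithinAt.of_notMem_closure (by rwa [closure_Iic])
  have mid : HasDerivWithinAt (kappaStar q em ep) (clamp em ep t ^ (q-2) * t)
      (Set.Icc em ep) t := by
    by_cases ht : t ∈ Set.Icc em ep
    · have ht0 : 0 < t := hem.trans_le ht.1
      have hpow := (Real.hasDerivAt_rpow_const (p := q) (Or.inl ht0.ne')).div_const q
      rw [clamp_of_mem ht.1 ht.2, ← Real.rpow_add_one ht0.ne', show q - 2 + 1 = q - 1 by ring,
        ← mul_div_cancel_left₀ (t ^ (q-1)) hq]
      exact hpow.hasDerivWithinAt.congr on_mid (on_mid t ht)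
    · exact HasFDerivWithinAt.of_notMem_closure (by rwa [closure_Icc])
  have high : HasDerivWithinAt (kappaStar q em ep) (clamp em ep t ^ (q-2) * t)
      (Set.Ici ep) t := by
    by_cases ht : t ∈ Set.Ici ep
    · rw [clamp_of_ge hme ht]
      exact (hasDerivAt_quadMajorant ep t).hasDerivWithinAt.congr on_high (on_high t ht)
    · exact HasFDerivWithinAt.of_notMem_closure (by rwa [closure_Ici])
  have := (low.union mid).union high
  rwa [Set.Iic_union_Icc_eq_Iic hme, Set.Iic_union_Ici, hasDerivWithinAt_univ] at this

lemma monotone_deriv_kappaStar_sub (hq1 : 1 < q) (hq2 : q < 2) (hem : 0 < em) (hme : em ≤ ep) :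
    Monotone fun t => clamp em ep t ^ (q-2) * t - (q-1) * ep ^ (q-2) * t := by
  have hep : 0 < ep := hem.trans_le hme
  have linear : ∀ c, 0 < c → c ≤ ep →
      Monotone fun t => c ^ (q-2) * t - (q-1) * ep ^ (q-2) * t := by
    intro c hc hce a b hab
    have : (q-1) * ep ^ (q-2) ≤ c ^ (q-2) := by
      nlinarith [Real.rpow_le_rpow_of_nonpos hc hce (by linarith : q - 2 ≤ 0),
        Real.rpow_pos_of_pos hep (q-2)]
    nlinarith
  have low : MonotoneOn (fun t => clamp em ep t ^ (q-2) * t - (q-1) * ep ^ (q-2) * t)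
      (Set.Iic em) :=
    (linear em hem hme).monotoneOn _ |>.congr fun t ht => by simp only [clamp_of_le hme ht]
  have mid : MonotoneOn (fun t => clamp em ep t ^ (q-2) * t - (q-1) * ep ^ (q-2) * t)
      (Set.Icc em ep) := by
    have hderiv : ∀ t > 0, HasDerivAt (fun t => t ^ (q-1) - (q-1) * ep ^ (q-2) * t)
        ((q-1) * t ^ (q-2) - (q-1) * ep ^ (q-2)) t := fun t ht => by
      have := (Real.hasDerivAt_rpow_const (p := q-1) (Or.inl ht.ne')).sub
        ((hasDerivAt_id t).const_mul ((q-1) * ep ^ (q-2)))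
      exact this.congr_deriv (by simp only [mul_one]; ring_nf)
    have : MonotoneOn (fun t => t ^ (q-1) - (q-1) * ep ^ (q-2) * t) (Set.Icc em ep) := by
      refine monotoneOn_of_hasDerivWithinAt_nonneg (convex_Icc em ep)
        (f' := fun t => (q-1) * t ^ (q-2) - (q-1) * ep ^ (q-2))
        (fun t ht => (hderiv t (hem.trans_le ht.1)).continuousAt.continuousWithinAt)
        (fun t ht => ?_) (fun t ht => ?_) <;> rw [interior_Icc] at ht
      · exact (hderiv t (hem.trans ht.1)).hasDerivWithinAt
      · have := Real.rpow_le_rpow_of_nonpos (hem.trans ht.1) ht.2.le (by linarith : q - 2 ≤ 0)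
        nlinarith
    refine this.congr fun t ht => ?_
    simp only [clamp_of_mem ht.1 ht.2]
    rw [← Real.rpow_add_one (hem.trans_le ht.1).ne']
    ring_nf
  have high : MonotoneOn (fun t => clamp em ep t ^ (q-2) * t - (q-1) * ep ^ (q-2) * t)
      (Set.Ici ep) :=
    (linear ep hep le_rfl).monotoneOn _ |>.congr fun t ht => by simp only [clamp_of_ge hme ht]
  refine MonotoneOn.Iic_union_Ici ?_ high
  rw [← Set.Iic_union_Icc_eq_Iic hme]
  exact low.union_right mid isGreatest_Iic (isLeast_Icc hme)

lemma kappaStar_nonneg (hq1 : 1 < q) (hq2 : q < 2) (hem : 0 < em) (hme : em ≤ ep) (t : ℝ) :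
    0 ≤ kappaStar q em ep t := by
  have hq : 0 < q := by linarith
  have hc : 0 < clamp em ep t := hem.trans_le le_clamp
  rw [kappaStar_eq_quadMajorant hem hme, quadMajorant]
  have : 1/2 ≤ 1/q := one_div_le_one_div_of_le hq hq2.le
  have := Real.rpow_pos_of_pos hc (q-2)
  have := Real.rpow_pos_of_pos hc q
  nlinarith [sq_nonneg t]

lemma kappaStar_le_frozenQuadric (hq1 : 1 < q) (hq2 : q < 2) (hem : 0 < em) (hme : em ≤ ep)
    (t : ℝ) {s : ℝ} (hs : 0 ≤ s) :
    kappaStar q em ep s ≤ kappaStar q em ep t + clamp em ep t ^ (q-2) / 2 * (s ^ 2 - t ^ 2) := by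
  have h := kappaStar_le_quadMajorant hq1 hq2 hem hme hs le_clamp (clamp_le hme)
    (c := clamp em ep t)
  rw [kappaStar_eq_quadMajorant hem hme t]
  simp only [quadMajorant] at h ⊢
  linarith

lemma kappaStar_tangent_le (hq1 : 1 < q) (hq2 : q < 2) (hem : 0 < em) (hme : em ≤ ep)
    (t s : ℝ) :
    kappaStar q em ep t + clamp em ep t ^ (q-2) * t * (s - t)
        + (q-1) * ep ^ (q-2) / 2 * (s - t) ^ 2 ≤ kappaStar q em ep s :=
  add_deriv_mul_sub_add_sq_le (hasDerivAt_kappaStar (by linarith) hem hme)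
    (monotone_deriv_kappaStar_sub hq1 hq2 hem hme) t s

end Scalar

section Pointwise

variable {E : Type*} [NormedAddCommGroup E] [InnerProductSpace ℝ E] {q em ep : ℝ}

/-- The gradient of `P ↦ κ*_ε(|P|)` at `u` is `A*_ε(u)`. -/
lemma kappaStar_norm_tangent_le (hq1 : 1 < q) (hq2 : q < 2) (hem : 0 < em) (hme : em ≤ ep)
    (u z : E) :
    kappaStar q em ep ‖u‖ + clamp em ep ‖u‖ ^ (q-2) * ⟪u, z - u⟫
        + (q-1) * ep ^ (q-2) / 2 * ‖z - u‖ ^ 2 ≤ kappaStar q em ep ‖z‖ := by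
  have scalar := kappaStar_tangent_le hq1 hq2 hem hme ‖u‖ ‖z‖
  have hw : (q-1) * ep ^ (q-2) ≤ clamp em ep ‖u‖ ^ (q-2) := by
    nlinarith [Real.rpow_le_rpow_of_nonpos (hem.trans_le (le_clamp (t := ‖u‖))) (clamp_le hme)
      (by linarith : q - 2 ≤ 0), Real.rpow_pos_of_pos (hem.trans_le hme) (q-2)]
  have cauchy_schwarz : ⟪u, z⟫ ≤ ‖u‖ * ‖z‖ := real_inner_le_norm u z
  rw [inner_sub_right, real_inner_self_eq_norm_sq, norm_sub_sq_real, real_inner_comm u z]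
  nlinarith [mul_le_mul_of_nonneg_left cauchy_schwarz (sub_nonneg.2 hw)]

lemma kacanov_step_pointwise (hq1 : 1 < q) (hq2 : q < 2) (hem : 0 < em) (hme : em ≤ ep)
    {θ : ℝ} (hθ : 0 ≤ θ) (u z s : E)
    (hθw : θ * clamp em ep ‖u‖ ^ (q-2) ≤ (q-1) * ep ^ (q-2)) :
    θ * (kappaStar q em ep ‖u‖ - kappaStar q em ep ‖s‖)
      ≤ kappaStar q em ep ‖u‖ - kappaStar q em ep ‖z‖
        - clamp em ep ‖u‖ ^ (q-2) * ⟪z, u - z⟫ + θ * (clamp em ep ‖u‖ ^ (q-2) * ⟪z, u - s⟫) := by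
  set w := clamp em ep ‖u‖ ^ (q-2)
  set μ := (q-1) * ep ^ (q-2)
  have hw : 0 ≤ w := Real.rpow_nonneg (hem.le.trans le_clamp) _
  have majorize := kappaStar_le_frozenQuadric hq1 hq2 hem hme ‖u‖ (norm_nonneg z)
  have convex := kappaStar_norm_tangent_le hq1 hq2 hem hme u s
  rw [← neg_sub u s, inner_neg_right, norm_neg] at convex
  have expand : ‖u‖ ^ 2 = ‖z‖ ^ 2 + 2 * ⟪z, u - z⟫ + ‖u - z‖ ^ 2 := by
    simpa using norm_add_sq_real z (u - z)
  have young : 2 * θ * ⟪u - z, u - s⟫ - θ ^ 2 * ‖u - s‖ ^ 2 ≤ ‖u - z‖ ^ 2 := by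
    have := norm_sub_sq_real (u - z) (θ • (u - s))
    rw [real_inner_smul_right, norm_smul, Real.norm_of_nonneg hθ] at this
    nlinarith [sq_nonneg ‖(u - z) - θ • (u - s)‖]
  have split : ⟪z, u - s⟫ = ⟪u, u - s⟫ - ⟪u - z, u - s⟫ := by rw [inner_sub_left]; ring
  have slack : 0 ≤ θ * (μ - θ * w) * ‖u - s‖ ^ 2 := by
    have := sub_nonneg.2 hθw
    positivity
  linear_combination majorize - w / 2 * expand + mul_le_mul_of_nonneg_left young hw / 2
    - θ * w * split + mul_le_mul_of_nonneg_left convex hθ + slack / 2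

end Pointwise

section Integral

variable {α E : Type*} [MeasurableSpace α] {μ : Measure α} [NormedAddCommGroup E] {q em ep : ℝ}

lemma integrable_kappaStar_norm [IsFiniteMeasure μ] (hq1 : 1 < q) (hq2 : q < 2) (hem : 0 < em)
    (hme : em ≤ ep) {f : α → E} (hf : MemLp f 2 μ) :
    Integrable (fun x => kappaStar q em ep ‖f x‖) μ := by
  have hκ : Continuous (kappaStar q em ep) := continuous_iff_continuousAt.2 fun t =>
    (hasDerivAt_kappaStar (by linarith) hem hme t).continuousAt
  have hf2 := (memLp_two_iff_integrable_sq_norm hf.1).1 hf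
  refine ((hf2.const_mul (em ^ (q-2) / 2)).add (integrable_const ((1/q - 1/2) * em ^ q))).mono'
    (hκ.comp_aestronglyMeasurable hf.1.norm) (ae_of_all _ fun x => ?_)
  rw [Real.norm_of_nonneg (kappaStar_nonneg hq1 hq2 hem hme _)]
  have := kappaStar_le_quadMajorant hq1 hq2 hem hme (norm_nonneg (f x)) le_rfl hme
  simp only [quadMajorant] at this
  simp only [Pi.add_apply]
  linarith

variable [InnerProductSpace ℝ E]

theorem MeasureTheory.MemLp.integrable_inner {f g : α → E} (hf : MemLp f 2 μ) (hg : MemLp g 2 μ) :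
    Integrable (fun x => ⟪f x, g x⟫) μ :=
  (L2.integrable_inner (hf.toLp f) (hg.toLp g)).congr <| by
    filter_upwards [hf.coeFn_toLp, hg.coeFn_toLp] with x hfx hgx
    rw [hfx, hgx]

lemma integrable_weight_mul_inner (hq2 : q < 2) (hem : 0 < em) {τ f g : α → E}
    (hτ : AEStronglyMeasurable τ μ) (hf : MemLp f 2 μ) (hg : MemLp g 2 μ) :
    Integrable (fun x => clamp em ep ‖τ x‖ ^ (q-2) * ⟪f x, g x⟫) μ := by
  have hw : Continuous fun t => clamp em ep t ^ (q-2) :=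
    (continuous_const.max (continuous_id.min continuous_const)).rpow_const
      fun t => Or.inl (hem.trans_le le_clamp).ne'
  refine (hf.integrable_inner hg).bdd_mul (c := em ^ (q-2))
    (hw.comp_aestronglyMeasurable hτ.norm) (ae_of_all _ fun x => ?_)
  rw [Real.norm_of_nonneg (Real.rpow_nonneg (hem.le.trans le_clamp) _)]
  exact Real.rpow_le_rpow_of_nonpos hem le_clamp (by linarith)

lemma kacanov_energy_contraction [IsFiniteMeasure μ] (hq1 : 1 < q) (hq2 : q < 2) (hem : 0 < em)
    (hme : em ≤ ep) {σ τ τ' : α → E} (hσ : MemLp σ 2 μ) (hτ : MemLp τ 2 μ) (hτ' : MemLp τ' 2 μ)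
    (hτ'_orth : ∫ x, clamp em ep ‖τ x‖ ^ (q-2) * ⟪τ' x, τ x - τ' x⟫ ∂μ = 0)
    (hσ_orth : ∫ x, clamp em ep ‖τ x‖ ^ (q-2) * ⟪τ' x, τ x - σ x⟫ ∂μ = 0) :
    (q-1) * (em / ep) ^ (2-q)
        * (∫ x, kappaStar q em ep ‖τ x‖ ∂μ - ∫ x, kappaStar q em ep ‖σ x‖ ∂μ)
      ≤ ∫ x, kappaStar q em ep ‖τ x‖ ∂μ - ∫ x, kappaStar q em ep ‖τ' x‖ ∂μ := by
  have hep : 0 < ep := hem.trans_le hme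
  set θ := (q-1) * (em / ep) ^ (2-q)
  have hθ : 0 ≤ θ := mul_nonneg (by linarith) (by positivity)
  -- `θ` is chosen so that `θ ε₋^(q-2)` is exactly the convexity modulus `(q-1) ε₊^(q-2)`.
  have hθw : ∀ x, θ * clamp em ep ‖τ x‖ ^ (q-2) ≤ (q-1) * ep ^ (q-2) := fun x =>
    calc θ * clamp em ep ‖τ x‖ ^ (q-2) ≤ θ * em ^ (q-2) :=
          mul_le_mul_of_nonneg_left (Real.rpow_le_rpow_of_nonpos hem le_clamp (by linarith)) hθ
      _ = (q-1) * ep ^ (q-2) := by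
          rw [mul_assoc, Real.div_rpow hem.le hep.le, div_mul_eq_mul_div, ← Real.rpow_add hem,
            show 2 - q + (q-2) = 0 by ring, Real.rpow_zero, one_div, ← Real.rpow_neg hep.le,
            neg_sub]
  have hκτ := integrable_kappaStar_norm hq1 hq2 hem hme hτ
  have hκτ' := integrable_kappaStar_norm hq1 hq2 hem hme hτ'
  have hκσ := integrable_kappaStar_norm hq1 hq2 hem hme hσ
  have hτ'_int : Integrable (fun x => clamp em ep ‖τ x‖ ^ (q-2) * ⟪τ' x, τ x - τ' x⟫) μ :=
    integrable_weight_mul_inner hq2 hem hτ.1 hτ' (hτ.sub hτ')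
  have hσ_int : Integrable (fun x => clamp em ep ‖τ x‖ ^ (q-2) * ⟪τ' x, τ x - σ x⟫) μ :=
    integrable_weight_mul_inner hq2 hem hτ.1 hτ' (hτ.sub hσ)
  have hgap : Integrable (fun x => kappaStar q em ep ‖τ x‖ - kappaStar q em ep ‖τ' x‖) μ :=
    hκτ.sub hκτ'
  have hgap' : Integrable (fun x => kappaStar q em ep ‖τ x‖ - kappaStar q em ep ‖τ' x‖
      - clamp em ep ‖τ x‖ ^ (q-2) * ⟪τ' x, τ x - τ' x⟫) μ := hgap.sub hτ'_int
  calc θ * (∫ x, kappaStar q em ep ‖τ x‖ ∂μ - ∫ x, kappaStar q em ep ‖σ x‖ ∂μ)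
      = ∫ x, θ * (kappaStar q em ep ‖τ x‖ - kappaStar q em ep ‖σ x‖) ∂μ := by
        rw [integral_const_mul, integral_sub hκτ hκσ]
    _ ≤ ∫ x, (kappaStar q em ep ‖τ x‖ - kappaStar q em ep ‖τ' x‖
          - clamp em ep ‖τ x‖ ^ (q-2) * ⟪τ' x, τ x - τ' x⟫
          + θ * (clamp em ep ‖τ x‖ ^ (q-2) * ⟪τ' x, τ x - σ x⟫)) ∂μ :=
        integral_mono ((hκτ.sub hκσ).const_mul θ)
          (hgap'.add (hσ_int.const_mul θ))
          fun x => kacanov_step_pointwise hq1 hq2 hem hme hθ (τ x) (τ' x) (σ x) (hθw x)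
    _ = ∫ x, kappaStar q em ep ‖τ x‖ ∂μ - ∫ x, kappaStar q em ep ‖τ' x‖ ∂μ := by
        rw [integral_add hgap' (hσ_int.const_mul θ), integral_sub hgap hτ'_int,
          integral_sub hκτ hκτ', integral_const_mul, hτ'_orth, hσ_orth]
        ring

end Integral

/-- exponential decay, Theorem 3.1 of the paper. There is a constant
`C_q < ∞` depending solely on `q` such that, with `δ = C_q⁻¹ (ε₋/ε₊)^(2-q)`, the Kačanov
iterate `τ_{n+1}` (characterized by the weighted orthogonality relations (ii)) and the
minimizer `σ_ε` (characterized by the Euler–Lagrange relation (i)) satisfy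
`δ (J*_ε(τ_n) - J*_ε(σ_ε)) ≤ J*_ε(τ_n) - J*_ε(τ_{n+1})`. -/
theorem stmt10 (q : ℝ) (hq1 : 1 < q) (hq2 : q < 2) :
    ∃ Cq : ℝ, 0 < Cq ∧
      ∀ (d : ℕ) (em ep : ℝ), 0 < em → em ≤ ep →
        ∀ (Ω : Set (EuclideanSpace ℝ (Fin d))), MeasurableSet Ω → volume Ω < ⊤ →
          ∀ (σe τn τn1 : EuclideanSpace ℝ (Fin d) → EuclideanSpace ℝ (Fin d)),
            Measurable σe → Measurable τn → Measurable τn1 →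
            IntegrableOn (fun x => ‖σe x‖ ^ 2) Ω volume →
            IntegrableOn (fun x => ‖τn x‖ ^ 2) Ω volume →
            IntegrableOn (fun x => ‖τn1 x‖ ^ 2) Ω volume →
            -- (i) Euler–Lagrange equation for the minimizer σ_ε
            (∫ x in Ω, ⟪Astar q em ep (σe x), τn x - σe x⟫) = 0 →
            -- (ii) equations characterizing the Kačanov iterate τ_{n+1}
            (∫ x in Ω, (max em (min ‖τn x‖ ep)) ^ (q-2) * ⟪τn1 x, τn x - τn1 x⟫) = 0 →
            (∫ x in Ω, (max em (min ‖τn x‖ ep)) ^ (q-2) * ⟪τn1 x, τn x - σe x⟫) = 0 →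
            Cq⁻¹ * (em / ep) ^ (2-q) * (Jeps q em ep Ω τn - Jeps q em ep Ω σe)
              ≤ Jeps q em ep Ω τn - Jeps q em ep Ω τn1 := by
  refine ⟨(q - 1)⁻¹, inv_pos.2 (by linarith), ?_⟩
  intro d em ep hem hme Ω _ hΩ σe τn τn1 hσ hτn hτn1 hσ2 hτn2 hτn12 _ hτn1_orth hσ_orth
  have : IsFiniteMeasure (volume.restrict Ω) := isFiniteMeasure_restrict.2 hΩ.ne
  have memLp_two {f : EuclideanSpace ℝ (Fin d) → EuclideanSpace ℝ (Fin d)} (hf : Measurable f)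
      (hf2 : IntegrableOn (fun x => ‖f x‖ ^ 2) Ω volume) : MemLp f 2 (volume.restrict Ω) :=
    (memLp_two_iff_integrable_sq_norm hf.aestronglyMeasurable).2 hf2
  rw [inv_inv]
  exact kacanov_energy_contraction hq1 hq2 hem hme (memLp_two hσ hσ2) (memLp_two hτn hτn2)
    (memLp_two hτn1 hτn12) hτn1_orth hσ_orth
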